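/- arXiv:2407.16543 — 4 statements merged into one kernel-verified Lean document; each statement's English description precedes it below -/
import Mathlib

section
/- (Theorem 1) Suppose the tuple (C̃_X, W̃_1, …, W̃_K) is feasible for Problem (14) and maximizes the objective a^H C_X a over all feasible tuples. Then h_k^H W̃_k h_k > 0 for every k, and, defining ŵ_k = (h_k^H W̃_k h_k)^{−1/2} W̃_k h_k and Ŵ_k = ŵ_k ŵ_k^H, the tuple (C̃_X, Ŵ_1, …, Ŵ_K) is also feasible for Problem (14) and attains the same objective value a^H C̃_X a; hence it is a globally optimal solution in which every matrix Ŵ_k is positive semidefinite of rank at most one. -/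
open Matrix
open scoped ComplexOrder

/-- The rank-one beamforming vector `ŵ = (hᴴ W h)^(−1/2) • (W h)`. -/
noncomputable def hatw {N : ℕ} (W : Matrix (Fin N) (Fin N) ℂ) (h : Fin N → ℂ) : Fin N → ℂ :=
  ((star h ⬝ᵥ W *ᵥ h) ^ (-(1 / 2) : ℂ)) • (W *ᵥ h)

/-- The rank-one beamforming covariance `Ŵ = ŵ ŵᴴ`. -/
noncomputable def hatW {N : ℕ} (W : Matrix (Fin N) (Fin N) ℂ) (h : Fin N → ℂ) :
    Matrix (Fin N) (Fin N) ℂ :=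
  vecMulVec (hatw W h) (star (hatw W h))

/-- Feasibility for Problem (14): all matrices are PSD, the SINR constraints (i) hold,
the power constraint (ii) holds, and `C_X − Σ_k W_k` is PSD (iii). -/
def Feasible {N K : ℕ} (h : Fin K → Fin N → ℂ) (Ω σsq : Fin K → ℝ) (P0 : ℝ)
    (CX : Matrix (Fin N) (Fin N) ℂ) (W : Fin K → Matrix (Fin N) (Fin N) ℂ) : Prop :=
  CX.PosSemidef ∧ (∀ k, (W k).PosSemidef) ∧
  (∀ k, (Ω k : ℂ) * (vecMulVec (h k) (star (h k)) * CX).trace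
      - (1 + (Ω k : ℂ)) * (vecMulVec (h k) (star (h k)) * W k).trace
      + (Ω k : ℂ) * (σsq k : ℂ) ≤ 0) ∧
  CX.trace ≤ (P0 : ℂ) ∧
  (CX - ∑ k, W k).PosSemidef

/-! ### Auxiliary lemmas -/


lemma herm_conj {N : ℕ} {A : Matrix (Fin N) (Fin N) ℂ} (hA : A.IsHermitian) (x y : Fin N → ℂ) :
    star y ⬝ᵥ A *ᵥ x = star (star x ⬝ᵥ A *ᵥ y) := by
  rw [star_dotProduct]
  congr 1
  rw [star_mulVec, ← dotProduct_mulVec, hA.eq]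

/-- Cauchy–Schwarz for the semi-inner product induced by a PSD matrix. -/
lemma cs_psd {N : ℕ} {A : Matrix (Fin N) (Fin N) ℂ} (hA : A.PosSemidef) (x y : Fin N → ℂ)
    (ht : 0 < star y ⬝ᵥ A *ᵥ y) :
    (star x ⬝ᵥ A *ᵥ y) * star (star x ⬝ᵥ A *ᵥ y)
      ≤ (star x ⬝ᵥ A *ᵥ x) * (star y ⬝ᵥ A *ᵥ y) := by
  set t := star y ⬝ᵥ A *ᵥ y with htdef
  set b := star x ⬝ᵥ A *ᵥ y with hbdef
  set p := star x ⬝ᵥ A *ᵥ x with hpdef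
  have htne : t ≠ 0 := ne_of_gt ht
  have hconj : star y ⬝ᵥ A *ᵥ x = star b := herm_conj hA.1 x y
  have hts : star t = t := by
    conv_rhs => rw [htdef, herm_conj hA.1 y y, ← htdef]
  set c : ℂ := star b / t with hcdef
  have key := hA.dotProduct_mulVec_nonneg (x - c • y)
  have expand : star (x - c • y) ⬝ᵥ A *ᵥ (x - c • y) = p - b * star b / t := by
    rw [star_sub, star_smul, Matrix.mulVec_sub, Matrix.mulVec_smul,
      sub_dotProduct, dotProduct_sub, dotProduct_sub, smul_dotProduct, smul_dotProduct,
      dotProduct_smul, dotProduct_smul, hconj, ← hbdef, ← hpdef, ← htdef]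
    simp only [smul_eq_mul, hcdef, star_div₀, star_star, hts]
    field_simp
    ring
  rw [expand] at key
  have h2 : b * star b / t ≤ p := sub_nonneg.mp key
  calc b * star b = (b * star b / t) * t := by field_simp
    _ ≤ p * t := mul_le_mul_of_nonneg_right h2 (le_of_lt ht)

lemma trace_outer_mul {N : ℕ} (h : Fin N → ℂ) (M : Matrix (Fin N) (Fin N) ℂ) :
    (vecMulVec h (star h) * M).trace = star h ⬝ᵥ M *ᵥ h := by
  simp only [Matrix.trace, Matrix.diag_apply, Matrix.mul_apply, vecMulVec_apply,
    dotProduct, mulVec, Pi.star_apply]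
  rw [Finset.sum_comm]
  simp only [Finset.mul_sum]
  refine Finset.sum_congr rfl fun j _ => Finset.sum_congr rfl fun i _ => by ring

lemma quad_outer {N : ℕ} (w x : Fin N → ℂ) :
    star x ⬝ᵥ (vecMulVec w (star w)) *ᵥ x = (star x ⬝ᵥ w) * star (star x ⬝ᵥ w) := by
  have h1 : star (star x ⬝ᵥ w) = star w ⬝ᵥ x := by
    simp [dotProduct, mul_comm]
  rw [h1]
  simp only [dotProduct, mulVec, vecMulVec_apply, Pi.star_apply]
  rw [Finset.sum_mul_sum]
  simp only [Finset.mul_sum]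
  refine Finset.sum_congr rfl fun i _ => Finset.sum_congr rfl fun j _ => by ring

lemma outer_posSemidef {N : ℕ} (w : Fin N → ℂ) : (vecMulVec w (star w)).PosSemidef := by
  refine .of_dotProduct_mulVec_nonneg ?_ ?_
  · ext i j
    simp [conjTranspose_apply, vecMulVec_apply, mul_comm]
  · intro x
    rw [quad_outer]
    exact mul_star_self_nonneg _

lemma complex_pos_eq {t : ℂ} (ht : 0 < t) : t = (t.re : ℂ) ∧ 0 < t.re := by
  rw [Complex.lt_def] at ht
  refine ⟨?_, by simpa using ht.1⟩
  apply Complex.ext <;> simp [← ht.2]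

lemma hatW_props {N : ℕ} {W : Matrix (Fin N) (Fin N) ℂ} (hW : W.PosSemidef) (h : Fin N → ℂ)
    (ht : 0 < star h ⬝ᵥ W *ᵥ h) :
    star h ⬝ᵥ (hatW W h) *ᵥ h = star h ⬝ᵥ W *ᵥ h ∧ (W - hatW W h).PosSemidef := by
  obtain ⟨hteq, hr⟩ := complex_pos_eq ht
  set r : ℝ := (star h ⬝ᵥ W *ᵥ h).re with hrdef
  set sR : ℝ := r ^ (-(1 / 2) : ℝ) with hsRdef
  have hsR : 0 < sR := Real.rpow_pos_of_pos hr _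
  have hs2 : sR * sR = r⁻¹ := by
    rw [hsRdef, ← Real.rpow_add hr]
    norm_num [Real.rpow_neg_one]
  have hs : (star h ⬝ᵥ W *ᵥ h) ^ (-(1 / 2) : ℂ) = (sR : ℂ) := by
    rw [hteq, hsRdef, Complex.ofReal_cpow hr.le]
    norm_num
  -- the key dot product with hatw
  have hz : ∀ x : Fin N → ℂ, star x ⬝ᵥ hatw W h = (sR : ℂ) * (star x ⬝ᵥ W *ᵥ h) := by
    intro x
    rw [hatw, hs, dotProduct_smul, smul_eq_mul]
  have hquad : ∀ x : Fin N → ℂ,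
      star x ⬝ᵥ (hatW W h) *ᵥ x
        = (sR : ℂ) * (sR : ℂ) * ((star x ⬝ᵥ W *ᵥ h) * star (star x ⬝ᵥ W *ᵥ h)) := by
    intro x
    rw [hatW, quad_outer, hz]
    simp only [star_mul', Complex.star_def, Complex.conj_ofReal]
    ring
  constructor
  · rw [hquad h]
    have hst : star (star h ⬝ᵥ W *ᵥ h) = star h ⬝ᵥ W *ᵥ h := by
      conv_rhs => rw [herm_conj hW.1 h h]
    rw [hst, hteq]
    have hinv : (sR:ℂ) * (sR:ℂ) = ((r:ℂ))⁻¹ := by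
      rw [show (sR:ℂ) * (sR:ℂ) = ((sR*sR:ℝ):ℂ) by push_cast; ring, hs2]; push_cast; ring
    rw [hinv]
    have hrne : (r:ℂ) ≠ 0 := Complex.ofReal_ne_zero.2 hr.ne'
    field_simp
  · refine .of_dotProduct_mulVec_nonneg ?_ ?_
    · have h1 : (hatW W h).IsHermitian := (outer_posSemidef (hatw W h)).1
      exact hW.1.sub h1
    · intro x
      rw [Matrix.sub_mulVec, dotProduct_sub, sub_nonneg, hquad x]
      have hcs := cs_psd hW x h ht
      calc (sR : ℂ) * (sR : ℂ) * ((star x ⬝ᵥ W *ᵥ h) * star (star x ⬝ᵥ W *ᵥ h))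
          ≤ (sR : ℂ) * (sR : ℂ) * ((star x ⬝ᵥ W *ᵥ x) * (star h ⬝ᵥ W *ᵥ h)) := by
            apply mul_le_mul_of_nonneg_left hcs
            have : (0:ℝ) ≤ sR * sR := by positivity
            calc (0:ℂ) = ((0:ℝ):ℂ) := by norm_num
              _ ≤ ((sR * sR : ℝ) : ℂ) := by exact_mod_cast this
              _ = (sR:ℂ) * (sR:ℂ) := by push_cast; ring
        _ = star x ⬝ᵥ W *ᵥ x := by
            rw [hteq]
            have hinv : (sR:ℂ) * (sR:ℂ) = ((r:ℂ))⁻¹ := by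
              rw [show (sR:ℂ) * (sR:ℂ) = ((sR*sR:ℝ):ℂ) by push_cast; ring, hs2]; push_cast; ring
            rw [hinv]
            have hrne : (r:ℂ) ≠ 0 := Complex.ofReal_ne_zero.2 hr.ne'
            field_simp

lemma qW_pos {N : ℕ} {C W : Matrix (Fin N) (Fin N) ℂ} (hC : C.PosSemidef) (hW : W.PosSemidef)
    (h : Fin N → ℂ) {Ω σ : ℝ} (hΩ : 0 < Ω) (hσ : 0 < σ)
    (hcon : (Ω : ℂ) * (vecMulVec h (star h) * C).trace
      - (1 + (Ω : ℂ)) * (vecMulVec h (star h) * W).trace + (Ω : ℂ) * (σ : ℂ) ≤ 0) :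
    0 < star h ⬝ᵥ W *ᵥ h := by
  rw [trace_outer_mul, trace_outer_mul] at hcon
  set qC := star h ⬝ᵥ C *ᵥ h with hqC
  set qW := star h ⬝ᵥ W *ᵥ h with hqW
  have h1 : (Ω : ℂ) * qC + (Ω : ℂ) * (σ : ℂ) ≤ (1 + (Ω : ℂ)) * qW := by
    have h2 : ((Ω : ℂ) * qC + (Ω : ℂ) * (σ : ℂ)) - (1 + (Ω : ℂ)) * qW ≤ 0 := by
      calc ((Ω : ℂ) * qC + (Ω : ℂ) * (σ : ℂ)) - (1 + (Ω : ℂ)) * qW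
          = (Ω : ℂ) * qC - (1 + (Ω : ℂ)) * qW + (Ω : ℂ) * (σ : ℂ) := by ring
        _ ≤ 0 := hcon
    exact sub_nonpos.mp h2
  have hΩC : (0:ℂ) < (Ω : ℂ) := by exact_mod_cast hΩ
  have hpos : (0:ℂ) < (Ω : ℂ) * qC + (Ω : ℂ) * (σ : ℂ) := by
    have hσC : (0:ℂ) < (σ : ℂ) := by exact_mod_cast hσ
    exact add_pos_of_nonneg_of_pos (mul_nonneg hΩC.le (hC.dotProduct_mulVec_nonneg h)) (mul_pos hΩC hσC)
  have hfin : (0:ℂ) < (1 + (Ω : ℂ)) * qW := lt_of_lt_of_le hpos h1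
  rcases (hW.dotProduct_mulVec_nonneg h).lt_or_eq with hlt | heq
  · exact hlt
  · exfalso
    rw [hqW, ← heq, mul_zero] at hfin
    exact lt_irrefl _ hfin

/-- Theorem 1: from an optimal solution `(C̃_X, W̃_1, …, W̃_K)` of Problem (14) one can
construct a globally optimal rank-one solution `(C̃_X, Ŵ_1, …, Ŵ_K)`. -/
theorem theorem1 {N K : ℕ} (h : Fin K → Fin N → ℂ) (Ω σsq : Fin K → ℝ)
    (hΩ : ∀ k, 0 < Ω k) (hσ : ∀ k, 0 < σsq k) (P0 : ℝ) (hP0 : 0 < P0) (a : Fin N → ℂ)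
    (Ct : Matrix (Fin N) (Fin N) ℂ) (Wt : Fin K → Matrix (Fin N) (Fin N) ℂ)
    (hfeas : Feasible h Ω σsq P0 Ct Wt)
    (hopt : ∀ (C : Matrix (Fin N) (Fin N) ℂ) (W : Fin K → Matrix (Fin N) (Fin N) ℂ),
      Feasible h Ω σsq P0 C W → star a ⬝ᵥ C *ᵥ a ≤ star a ⬝ᵥ Ct *ᵥ a) :
    (∀ k, 0 < star (h k) ⬝ᵥ Wt k *ᵥ h k) ∧
    Feasible h Ω σsq P0 Ct (fun k => hatW (Wt k) (h k)) ∧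
    star a ⬝ᵥ Ct *ᵥ a = star a ⬝ᵥ Ct *ᵥ a ∧
    (∀ (C : Matrix (Fin N) (Fin N) ℂ) (W : Fin K → Matrix (Fin N) (Fin N) ℂ),
      Feasible h Ω σsq P0 C W → star a ⬝ᵥ C *ᵥ a ≤ star a ⬝ᵥ Ct *ᵥ a) ∧
    (∀ k, (hatW (Wt k) (h k)).PosSemidef ∧ (hatW (Wt k) (h k)).rank ≤ 1) := by
  obtain ⟨hCt, hWtp, hcon, hpow, hdiff⟩ := hfeas
  have hpos : ∀ k, 0 < star (h k) ⬝ᵥ Wt k *ᵥ h k :=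
    fun k => qW_pos hCt (hWtp k) (h k) (hΩ k) (hσ k) (hcon k)
  have hprops := fun k => hatW_props (hWtp k) (h k) (hpos k)
  refine ⟨hpos, ⟨hCt, fun k => outer_posSemidef _, ?_, hpow, ?_⟩, rfl, hopt, ?_⟩
  · intro k
    have e1 : (vecMulVec (h k) (star (h k)) * hatW (Wt k) (h k)).trace
        = (vecMulVec (h k) (star (h k)) * Wt k).trace := by
      rw [trace_outer_mul, trace_outer_mul, (hprops k).1]
    simpa only [e1] using hcon k
  · have e2 : Ct - ∑ k, hatW (Wt k) (h k)
        = (Ct - ∑ k, Wt k) + ∑ k, (Wt k - hatW (Wt k) (h k)) := by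
      rw [Finset.sum_sub_distrib]
      abel
    rw [e2]
    refine hdiff.add ?_
    refine Finset.sum_induction _ _ (fun A B hA hB => hA.add hB) ?_ ?_
    · exact Matrix.PosSemidef.zero
    · exact fun k _ => (hprops k).2
  · intro k
    refine ⟨outer_posSemidef _, ?_⟩
    rw [hatW, vecMulVec_eq (Fin 1)]
    exact le_trans (Matrix.rank_mul_le_right _ _) ((Matrix.rank_le_card_height _).trans (by simp))
end

section
/- Let W be an N×N PSD complex matrix and h ∈ ℂ^N with h^H W h > 0. Define Ŵ = (W h h^H W)/(h^H W h). Then Ŵ is PSD of rank at most one, h^H Ŵ h = h^H W h, and W − Ŵ is PSD. -/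
open Matrix
open scoped ComplexOrder

private lemma vecMulVec_mulVec' {N : ℕ} (u v x : Fin N → ℂ) :
    vecMulVec u v *ᵥ x = (v ⬝ᵥ x) • u := by
  ext i
  simp [vecMulVec_apply, mulVec, dotProduct, Finset.mul_sum, mul_comm, mul_left_comm]

private lemma cs_dot {N : ℕ} (a b : Fin N → ℂ) :
    (star a ⬝ᵥ b) * (star b ⬝ᵥ a) ≤ (star b ⬝ᵥ b) * (star a ⬝ᵥ a) := by
  set a' : EuclideanSpace ℂ (Fin N) := (WithLp.equiv 2 _).symm a
  set b' : EuclideanSpace ℂ (Fin N) := (WithLp.equiv 2 _).symm b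
  have hab : star a ⬝ᵥ b = inner ℂ a' b' := by
    rw [dotProduct_comm]; rfl
  have hba : star b ⬝ᵥ a = inner ℂ b' a' := by
    rw [dotProduct_comm]; rfl
  have haa : star a ⬝ᵥ a = ((‖a'‖ : ℂ)) ^ 2 := by
    rw [show star a ⬝ᵥ a = inner ℂ a' a' from by rw [dotProduct_comm]; rfl]
    exact inner_self_eq_norm_sq_to_K a'
  have hbb : star b ⬝ᵥ b = ((‖b'‖ : ℂ)) ^ 2 := by
    rw [show star b ⬝ᵥ b = inner ℂ b' b' from by rw [dotProduct_comm]; rfl]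
    exact inner_self_eq_norm_sq_to_K b'
  have hba' : (inner ℂ b' a' : ℂ) = starRingEnd ℂ (inner ℂ a' b') := (inner_conj_symm b' a').symm
  rw [hab, hba, haa, hbb, hba', Complex.mul_conj]
  have h2 : ((‖b'‖ : ℂ)) ^ 2 * ((‖a'‖ : ℂ)) ^ 2 = (((‖b'‖ ^ 2 * ‖a'‖ ^ 2 : ℝ)) : ℂ) := by
    push_cast; ring
  rw [h2, Complex.real_le_real]
  have hcs := norm_inner_le_norm (𝕜 := ℂ) a' b'
  have hns : Complex.normSq (inner ℂ a' b') = ‖(inner ℂ a' b' : ℂ)‖ ^ 2 := by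
    rw [Complex.normSq_eq_norm_sq]
  rw [hns]
  nlinarith [norm_nonneg (inner ℂ a' b' : ℂ), norm_nonneg a', norm_nonneg b']

/-- Key matrix fact: if `W` is PSD and `hᴴ W h > 0`, then `Ŵ = (W h hᴴ W)/(hᴴ W h)`
is PSD of rank at most one, preserves the quadratic form at `h`, and `W − Ŵ` is PSD. -/
theorem rank_one_reconstruction {N : ℕ} (W : Matrix (Fin N) (Fin N) ℂ) (hW : W.PosSemidef)
    (h : Fin N → ℂ) (hpos : 0 < star h ⬝ᵥ W *ᵥ h)
    (What : Matrix (Fin N) (Fin N) ℂ)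
    (hWhat : What = (star h ⬝ᵥ W *ᵥ h)⁻¹ • (W * vecMulVec h (star h) * W)) :
    What.PosSemidef ∧ What.rank ≤ 1 ∧
    star h ⬝ᵥ What *ᵥ h = star h ⬝ᵥ W *ᵥ h ∧ (W - What).PosSemidef := by
  set c : ℂ := star h ⬝ᵥ W *ᵥ h with hc
  set u : Fin N → ℂ := W *ᵥ h with hu
  have hcre : 0 < c.re := (Complex.lt_def.mp hpos).1
  have hcim : c.im = 0 := ((Complex.lt_def.mp hpos).2).symm
  have hceq : c = ((c.re : ℝ) : ℂ) := by
    apply Complex.ext <;> simp [hcim]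
  have hcne : c ≠ 0 := ne_of_gt hpos
  have hcinv_eq : c⁻¹ = (((c.re)⁻¹ : ℝ) : ℂ) := by
    rw [Complex.ofReal_inv, ← hceq]
  have hcinv_nonneg : 0 ≤ c⁻¹ := by
    rw [hcinv_eq]
    rw [Complex.zero_le_real]
    positivity
  -- star u = star h ᵥ* W
  have hstaru : star u = star h ᵥ* W := by
    rw [hu, star_mulVec, hW.1]
  -- key matrix identity
  have key : W * vecMulVec h (star h) * W = vecMulVec u (star u) := by
    rw [mul_vecMulVec, vecMulVec_mul, ← hu, ← hstaru]
  have hWhat' : What = c⁻¹ • vecMulVec u (star u) := by rw [hWhat, key]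
  -- quadratic form of What
  have form : ∀ x : Fin N → ℂ,
      star x ⬝ᵥ What *ᵥ x = c⁻¹ * ((star x ⬝ᵥ u) * (star u ⬝ᵥ x)) := by
    intro x
    rw [hWhat', smul_mulVec, dotProduct_smul, vecMulVec_mulVec',
      dotProduct_smul, smul_eq_mul, smul_eq_mul]
    ring
  -- conj of star x ⬝ᵥ u
  have hconj : ∀ x : Fin N → ℂ, star u ⬝ᵥ x = star (star x ⬝ᵥ u) := by
    intro x
    rw [star_dotProduct]
  have hnonneg : ∀ x : Fin N → ℂ, 0 ≤ (star x ⬝ᵥ u) * (star u ⬝ᵥ x) := by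
    intro x
    rw [hconj x, mul_comm]
    exact star_mul_self_nonneg _
  have hHerm : What.IsHermitian := by
    rw [hWhat']
    have h1 : (vecMulVec u (star u)).IsHermitian := by
      ext i j
      simp [conjTranspose_apply, vecMulVec_apply, mul_comm]
    have h2 : star c⁻¹ = c⁻¹ := by
      rw [hcinv_eq]; exact Complex.conj_ofReal _
    unfold Matrix.IsHermitian
    rw [conjTranspose_smul, h2, h1]
  have hPSD : What.PosSemidef := by
    apply Matrix.PosSemidef.of_dotProduct_mulVec_nonneg
    · exact hHerm
    · intro x
      rw [form x]
      exact mul_nonneg hcinv_nonneg (hnonneg x)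
  refine ⟨hPSD, ?_, ?_, ?_⟩
  · -- rank
    have : What = (c⁻¹ • (1 : Matrix (Fin N) (Fin N) ℂ)) *
        (replicateCol (Fin 1) u * replicateRow (Fin 1) (star u)) := by
      rw [hWhat', vecMulVec_eq (Fin 1), Matrix.smul_mul, Matrix.one_mul]
      rfl
    rw [this]
    calc ((c⁻¹ • (1 : Matrix (Fin N) (Fin N) ℂ)) *
          (replicateCol (Fin 1) u * replicateRow (Fin 1) (star u))).rank
        ≤ (replicateCol (Fin 1) u * replicateRow (Fin 1) (star u)).rank := rank_mul_le_right _ _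
      _ ≤ (replicateCol (Fin 1) u).rank := rank_mul_le_left _ _
      _ ≤ Fintype.card (Fin 1) := rank_le_card_width _
      _ = 1 := by simp
  · -- quadratic form at h
    rw [form h]
    have h1 : star h ⬝ᵥ u = c := rfl
    have h2 : star u ⬝ᵥ h = c := by
      rw [hconj h, h1, Complex.star_def]
      exact Complex.conj_eq_iff_im.mpr hcim
    rw [h1, h2]
    field_simp
  · -- W - What PSD
    apply Matrix.PosSemidef.of_dotProduct_mulVec_nonneg
    · exact hW.1.sub hHerm
    · intro x
      have hsub : star x ⬝ᵥ (W - What) *ᵥ x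
          = star x ⬝ᵥ W *ᵥ x - star x ⬝ᵥ What *ᵥ x := by
        rw [Matrix.sub_mulVec, dotProduct_sub]
      rw [hsub, form x, sub_nonneg]
      -- Cauchy-Schwarz with a = B x, b = B h, B = sqrt W
      open scoped MatrixOrder in
      set B := CFC.sqrt W with hB
      open scoped MatrixOrder in
      have hBH : Bᴴ = B := (CFC.sqrt_nonneg W).posSemidef.1
      open scoped MatrixOrder in
      have hBB : B * B = W := CFC.sqrt_mul_sqrt_self W hW.nonneg
      set a : Fin N → ℂ := B *ᵥ x with ha
      set b : Fin N → ℂ := B *ᵥ h with hb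
      have hstara : star x ᵥ* B = star a := by
        rw [ha, star_mulVec, hBH]
      have hstarb : star h ᵥ* B = star b := by
        rw [hb, star_mulVec, hBH]
      have hq : star x ⬝ᵥ W *ᵥ x = star a ⬝ᵥ a := by
        rw [← hBB, ← mulVec_mulVec, dotProduct_mulVec, hstara, ← ha]
      have hz : star x ⬝ᵥ u = star a ⬝ᵥ b := by
        rw [hu, ← hBB, ← mulVec_mulVec, dotProduct_mulVec, hstara, ← hb]
      have hz' : star u ⬝ᵥ x = star b ⬝ᵥ a := by
        rw [hconj x, hz, star_dotProduct, star_star]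
      have hcb : c = star b ⬝ᵥ b := by
        rw [hc, hu, ← hBB, ← mulVec_mulVec, dotProduct_mulVec, hstarb, ← hb]
      rw [hq, hz, hz']
      have cs := cs_dot a b
      calc c⁻¹ * (star a ⬝ᵥ b * (star b ⬝ᵥ a))
          ≤ c⁻¹ * (star b ⬝ᵥ b * (star a ⬝ᵥ a)) :=
            mul_le_mul_of_nonneg_left cs hcinv_nonneg
        _ = c⁻¹ * c * (star a ⬝ᵥ a) := by rw [hcb]; ring
        _ = star a ⬝ᵥ a := by rw [inv_mul_cancel₀ hcne, one_mul]
end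

section
/- (Lemma 1) Let Ŵ_1, …, Ŵ_K and Ĉ_R be N×N PSD complex matrices, let ι_1, …, ι_K ≥ 0 with Σ_{k=1}^K ι_k = 1, and set W̆_k = Ŵ_k + ι_k Ĉ_R. Let h_1, …, h_K ∈ ℂ^N satisfy h_k^H W̆_k h_k > 0, and define the rank-one matrices W̄_k = (W̆_k h_k h_k^H W̆_k)/(h_k^H W̆_k h_k). Then for every a ∈ ℂ^N: a^H (Σ_{k=1}^K W̄_k) a ≤ a^H (Σ_{k=1}^K Ŵ_k + Ĉ_R) a. Moreover, if for every k there exists c_k ∈ ℂ with c_k ≠ 0 and h_k = c_k a (the case where the BS–user direct links are completely blocked and the BS–IRS channel is line-of-sight, so every effective user channel is proportional to the transmit steering vector a), then equality holds. -/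
open Matrix
open scoped ComplexOrder

private lemma vmv_mulVec {N : ℕ} (h x : Fin N → ℂ) :
    vecMulVec h (star h) *ᵥ x = (star h ⬝ᵥ x) • h := by
  funext i
  simp only [mulVec, dotProduct, vecMulVec_apply, Pi.smul_apply, smul_eq_mul, Finset.sum_mul]
  exact Finset.sum_congr rfl fun j _ => by ring

open scoped MatrixOrder in
noncomputable def Matrix.PosSemidef.sqrt {N : ℕ} {M : Matrix (Fin N) (Fin N) ℂ}
    (_hM : M.PosSemidef) : Matrix (Fin N) (Fin N) ℂ := CFC.sqrt M

open scoped MatrixOrder in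
lemma Matrix.PosSemidef.sqrt_mul_self {N : ℕ} {M : Matrix (Fin N) (Fin N) ℂ}
    (hM : M.PosSemidef) : hM.sqrt * hM.sqrt = M := CFC.sqrt_mul_sqrt_self M hM.nonneg

open scoped MatrixOrder in
lemma Matrix.PosSemidef.posSemidef_sqrt {N : ℕ} {M : Matrix (Fin N) (Fin N) ℂ}
    (hM : M.PosSemidef) : hM.sqrt.PosSemidef := (CFC.sqrt_nonneg M).posSemidef

private lemma dot_sqrt {N : ℕ} {M : Matrix (Fin N) (Fin N) ℂ} (hM : M.PosSemidef)
    (x y : Fin N → ℂ) :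
    star x ⬝ᵥ M *ᵥ y = star (hM.sqrt *ᵥ x) ⬝ᵥ (hM.sqrt *ᵥ y) := by
  conv_lhs => rw [← hM.sqrt_mul_self]
  rw [← mulVec_mulVec, dotProduct_mulVec, star_mulVec, hM.posSemidef_sqrt.isHermitian.eq]

private lemma cs' {N : ℕ} (u v : Fin N → ℂ) :
    Complex.normSq (star u ⬝ᵥ v) ≤ (star u ⬝ᵥ u).re * (star v ⬝ᵥ v).re := by
  have := inner_mul_inner_self_le (𝕜 := ℂ) (WithLp.toLp 2 u) (WithLp.toLp 2 v)
  rw [EuclideanSpace.inner_toLp_toLp, EuclideanSpace.inner_toLp_toLp,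
    EuclideanSpace.inner_toLp_toLp, EuclideanSpace.inner_toLp_toLp] at this
  rw [dotProduct_comm v (star u), dotProduct_comm u (star v), dotProduct_comm u (star u),
    dotProduct_comm v (star v)] at this
  have hz : star v ⬝ᵥ u = star (star u ⬝ᵥ v) := star_dotProduct _ _
  rw [hz, norm_star] at this
  calc Complex.normSq (star u ⬝ᵥ v) = ‖star u ⬝ᵥ v‖ * ‖star u ⬝ᵥ v‖ := by
        rw [← Complex.sq_norm, sq]
    _ ≤ _ := this

private lemma lhs_eq {N : ℕ} (M : Matrix (Fin N) (Fin N) ℂ) (h a : Fin N → ℂ) :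
    star a ⬝ᵥ (M * vecMulVec h (star h) * M) *ᵥ a
      = (star h ⬝ᵥ M *ᵥ a) * (star a ⬝ᵥ M *ᵥ h) := by
  rw [← mulVec_mulVec, ← mulVec_mulVec, vmv_mulVec, mulVec_smul, dotProduct_smul, smul_eq_mul]

private lemma key {N : ℕ} {M : Matrix (Fin N) (Fin N) ℂ} (hM : M.PosSemidef)
    (h a : Fin N → ℂ) (hd : 0 < star h ⬝ᵥ M *ᵥ h) :
    star a ⬝ᵥ ((star h ⬝ᵥ M *ᵥ h)⁻¹ • (M * vecMulVec h (star h) * M)) *ᵥ a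
      ≤ star a ⬝ᵥ M *ᵥ a := by
  set B := hM.sqrt with hB
  set u := B *ᵥ h with hu
  set v := B *ᵥ a with hv
  have e1 : star h ⬝ᵥ M *ᵥ h = star u ⬝ᵥ u := dot_sqrt hM h h
  have e2 : star h ⬝ᵥ M *ᵥ a = star u ⬝ᵥ v := dot_sqrt hM h a
  have e3 : star a ⬝ᵥ M *ᵥ h = star v ⬝ᵥ u := dot_sqrt hM a h
  have e4 : star a ⬝ᵥ M *ᵥ a = star v ⬝ᵥ v := dot_sqrt hM a a
  rw [smul_mulVec, dotProduct_smul, smul_eq_mul, lhs_eq, e1, e2, e3, e4,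
    star_dotProduct v u,
    show (star (star u ⬝ᵥ v)) = (starRingEnd ℂ) (star u ⬝ᵥ v) from rfl, Complex.mul_conj]
  have hdc := Complex.lt_def.mp (e1 ▸ hd)
  have hdre : 0 < (star u ⬝ᵥ u).re := by simpa using hdc.1
  have hdim : (star u ⬝ᵥ u).im = 0 := by simpa using hdc.2.symm
  have hvc := Complex.le_def.mp (dotProduct_star_self_nonneg v)
  have hvre : 0 ≤ (star v ⬝ᵥ v).re := by simpa using hvc.1
  have hvim : (star v ⬝ᵥ v).im = 0 := by simpa using hvc.2.symm
  have huu : star u ⬝ᵥ u = ((star u ⬝ᵥ u).re : ℂ) := by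
    apply Complex.ext <;> simp [hdim]
  have hvv : star v ⬝ᵥ v = ((star v ⬝ᵥ v).re : ℂ) := by
    apply Complex.ext <;> simp [hvim]
  rw [huu, hvv, ← Complex.ofReal_inv, ← Complex.ofReal_mul, Complex.real_le_real]
  rw [inv_mul_le_iff₀ hdre]
  exact cs' u v

/-- Lemma 1: the dedicated sensing beamformer cannot improve the sensing objective,
with equality when every effective user channel is a nonzero multiple of the
steering vector `a` (BS-user direct links blocked, LoS BS-IRS channel). -/
theorem lemma1 {N K : ℕ}
    (What : Fin K → Matrix (Fin N) (Fin N) ℂ) (CR : Matrix (Fin N) (Fin N) ℂ)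
    (hWhat : ∀ k, (What k).PosSemidef) (hCR : CR.PosSemidef)
    (ι : Fin K → ℝ) (hι : ∀ k, 0 ≤ ι k) (hιsum : ∑ k, ι k = 1)
    (h : Fin K → Fin N → ℂ)
    (Wbr : Fin K → Matrix (Fin N) (Fin N) ℂ)
    (hWbr : ∀ k, Wbr k = What k + (ι k : ℂ) • CR)
    (hpos : ∀ k, 0 < star (h k) ⬝ᵥ Wbr k *ᵥ h k)
    (Wbar : Fin K → Matrix (Fin N) (Fin N) ℂ)
    (hWbar : ∀ k, Wbar k =
      (star (h k) ⬝ᵥ Wbr k *ᵥ h k)⁻¹ • (Wbr k * vecMulVec (h k) (star (h k)) * Wbr k))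
    (a : Fin N → ℂ) :
    star a ⬝ᵥ (∑ k, Wbar k) *ᵥ a ≤ star a ⬝ᵥ ((∑ k, What k) + CR) *ᵥ a ∧
    ((∀ k, ∃ c : ℂ, c ≠ 0 ∧ h k = c • a) →
      star a ⬝ᵥ (∑ k, Wbar k) *ᵥ a = star a ⬝ᵥ ((∑ k, What k) + CR) *ᵥ a) := by
  -- PSD of Wbr k
  have hWbrPSD : ∀ k, (Wbr k).PosSemidef := by
    intro k
    rw [hWbr k]
    refine (hWhat k).add ?_
    refine Matrix.PosSemidef.of_dotProduct_mulVec_nonneg ?_ ?_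
    · unfold Matrix.IsHermitian
      rw [conjTranspose_smul, hCR.isHermitian.eq]
      congr 1
      simp
    · intro x
      rw [smul_mulVec, dotProduct_smul, smul_eq_mul]
      exact mul_nonneg (by simpa [Complex.le_def] using hι k)
        (hCR.dotProduct_mulVec_nonneg x)
  -- sum decomposition of RHS
  have hsum_dot : ∀ (W : Fin K → Matrix (Fin N) (Fin N) ℂ),
      star a ⬝ᵥ (∑ k, W k) *ᵥ a = ∑ k, star a ⬝ᵥ W k *ᵥ a := by
    intro W
    classical
    induction (Finset.univ : Finset (Fin K)) using Finset.induction_on with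
    | empty => simp [mulVec, dotProduct]
    | insert x s hx ih => simp [Finset.sum_insert hx, add_mulVec, dotProduct_add, ih]
  -- termwise inequality
  have hterm : ∀ k, star a ⬝ᵥ Wbar k *ᵥ a ≤ star a ⬝ᵥ Wbr k *ᵥ a := by
    intro k
    rw [hWbar k]
    exact key (hWbrPSD k) (h k) a (hpos k)
  have hRHS : ∑ k, star a ⬝ᵥ Wbr k *ᵥ a = star a ⬝ᵥ ((∑ k, What k) + CR) *ᵥ a := by
    have : ∀ k, star a ⬝ᵥ Wbr k *ᵥ a
        = star a ⬝ᵥ What k *ᵥ a + (ι k : ℂ) * (star a ⬝ᵥ CR *ᵥ a) := by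
      intro k
      rw [hWbr k, add_mulVec, dotProduct_add, smul_mulVec, dotProduct_smul, smul_eq_mul]
    rw [Finset.sum_congr rfl fun k _ => this k, Finset.sum_add_distrib,
      ← Finset.sum_mul, add_mulVec, dotProduct_add, hsum_dot]
    congr 1
    have : (∑ k, ((ι k : ℂ))) = 1 := by
      rw [← Complex.ofReal_sum, hιsum, Complex.ofReal_one]
    rw [this, one_mul]
  constructor
  · rw [hsum_dot, ← hRHS]
    exact Finset.sum_le_sum fun k _ => hterm k
  · intro hLoS
    rw [hsum_dot, ← hRHS]
    refine Finset.sum_congr rfl fun k _ => ?_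
    obtain ⟨c, hc, hck⟩ := hLoS k
    have hd := hpos k
    set q := star a ⬝ᵥ Wbr k *ᵥ a with hq
    have e5 : star (h k) ⬝ᵥ Wbr k *ᵥ a = (starRingEnd ℂ) c * q := by
      rw [hck, star_smul, smul_dotProduct, smul_eq_mul, starRingEnd_apply]
    have e6 : star a ⬝ᵥ Wbr k *ᵥ h k = c * q := by
      rw [hck, mulVec_smul, dotProduct_smul, smul_eq_mul]
    have e7 : star (h k) ⬝ᵥ Wbr k *ᵥ h k = (starRingEnd ℂ) c * c * q := by
      rw [hck, star_smul, smul_dotProduct, mulVec_smul, dotProduct_smul, smul_eq_mul,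
        smul_eq_mul, starRingEnd_apply]
      ring
    have hdne : star (h k) ⬝ᵥ Wbr k *ᵥ h k ≠ 0 := ne_of_gt hd
    have hqne : q ≠ 0 := by
      intro h0
      rw [e7, h0, mul_zero] at hdne
      exact hdne rfl
    have hcc : (starRingEnd ℂ) c ≠ 0 := by simpa using hc
    rw [hWbar k, smul_mulVec, dotProduct_smul, smul_eq_mul, lhs_eq, e5, e6, e7]
    field_simp
end

section
/- Let Ŵ_1, …, Ŵ_K and Ĉ_R be N×N PSD complex matrices and set Ĉ_X = Σ_{k=1}^K Ŵ_k + Ĉ_R. Let h_k ∈ ℂ^N, Ω_k > 0, σ_k² > 0 for k = 1, …, K and P_0 > 0, and suppose Ω_k Tr(h_k h_k^H Ĉ_X) − (1+Ω_k) Tr(h_k h_k^H Ŵ_k) + Ω_k σ_k² ≤ 0 for every k and Tr(Ĉ_X) ≤ P_0. For any ι_1, …, ι_K ≥ 0 with Σ_{k=1}^K ι_k = 1, define W̆_k = Ŵ_k + ι_k Ĉ_R. Then every W̆_k is PSD, Σ_{k=1}^K W̆_k = Ĉ_X, and: (i) Ω_k Tr(h_k h_k^H Σ_{i=1}^K W̆_i)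 − (1+Ω_k) Tr(h_k h_k^H W̆_k) + Ω_k σ_k² ≤ 0 for every k; (ii) Tr(Σ_{k=1}^K W̆_k) ≤ P_0; and (iii) a^H (Σ_{k=1}^K W̆_k) a = a^H Ĉ_X a for every a ∈ ℂ^N. -/
open Matrix
open scoped ComplexOrder

lemma trace_vmv {N : ℕ} (x : Fin N → ℂ) (M : Matrix (Fin N) (Fin N) ℂ) :
    (vecMulVec x (star x) * M).trace = star x ⬝ᵥ M *ᵥ x := by
  simp [Matrix.trace, Matrix.mul_apply, vecMulVec_apply, dotProduct, Matrix.mulVec,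
    Finset.mul_sum, Finset.sum_mul]
  rw [Finset.sum_comm]
  congr 1; ext j; congr 1; ext i; ring

lemma psd_smul {N : ℕ} (c : ℝ) (hc : 0 ≤ c) {M : Matrix (Fin N) (Fin N) ℂ}
    (hM : M.PosSemidef) : ((c : ℂ) • M).PosSemidef := by
  refine posSemidef_iff_dotProduct_mulVec.mpr ⟨?_, ?_⟩
  · unfold Matrix.IsHermitian
    rw [conjTranspose_smul, hM.1.eq]
    congr 1
    simp
  · intro x
    rw [smul_mulVec, dotProduct_smul]
    exact smul_nonneg (by exact_mod_cast hc) (hM.dotProduct_mulVec_nonneg x)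

/-- From any feasible solution of the joint sensing–communication SDP with dedicated
sensing covariance `Ĉ_R`, the communication-only solution `W̆_k = Ŵ_k + ι_k Ĉ_R`
remains feasible and attains the same sensing objective. -/
theorem communication_only_construction {N K : ℕ}
    (What : Fin K → Matrix (Fin N) (Fin N) ℂ) (CR : Matrix (Fin N) (Fin N) ℂ)
    (hWhat : ∀ k, (What k).PosSemidef) (hCR : CR.PosSemidef)
    (CX : Matrix (Fin N) (Fin N) ℂ) (hCX : CX = (∑ k, What k) + CR)
    (h : Fin K → Fin N → ℂ) (Ω σsq : Fin K → ℝ)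
    (hΩ : ∀ k, 0 < Ω k) (hσ : ∀ k, 0 < σsq k) (P0 : ℝ) (hP0 : 0 < P0)
    (hSINR : ∀ k, (Ω k : ℂ) * (vecMulVec (h k) (star (h k)) * CX).trace
      - (1 + (Ω k : ℂ)) * (vecMulVec (h k) (star (h k)) * What k).trace
      + (Ω k : ℂ) * (σsq k : ℂ) ≤ 0)
    (hPow : CX.trace ≤ (P0 : ℂ))
    (ι : Fin K → ℝ) (hι : ∀ k, 0 ≤ ι k) (hιsum : ∑ k, ι k = 1)
    (Wbr : Fin K → Matrix (Fin N) (Fin N) ℂ)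
    (hWbr : ∀ k, Wbr k = What k + (ι k : ℂ) • CR) :
    (∀ k, (Wbr k).PosSemidef) ∧
    (∑ k, Wbr k) = CX ∧
    (∀ k, (Ω k : ℂ) * (vecMulVec (h k) (star (h k)) * (∑ i, Wbr i)).trace
      - (1 + (Ω k : ℂ)) * (vecMulVec (h k) (star (h k)) * Wbr k).trace
      + (Ω k : ℂ) * (σsq k : ℂ) ≤ 0) ∧
    (∑ k, Wbr k).trace ≤ (P0 : ℂ) ∧
    (∀ a : Fin N → ℂ, star a ⬝ᵥ (∑ k, Wbr k) *ᵥ a = star a ⬝ᵥ CX *ᵥ a) := by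
  have hsum : (∑ k, Wbr k) = CX := by
    simp only [hWbr, hCX, Finset.sum_add_distrib, ← Finset.sum_smul]
    congr 1
    have : (∑ k, ((ι k : ℂ))) = 1 := by
      rw [← Complex.ofReal_sum, hιsum, Complex.ofReal_one]
    rw [this, one_smul]
  refine ⟨fun k => (hWbr k) ▸ (hWhat k).add (psd_smul (ι k) (hι k) hCR), hsum, ?_, ?_, ?_⟩
  · intro k
    rw [hsum, hWbr k]
    have ht : 0 ≤ (vecMulVec (h k) (star (h k)) * CR).trace := by
      rw [trace_vmv]; exact hCR.dotProduct_mulVec_nonneg (h k)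
    have hc : 0 ≤ (1 + (Ω k : ℂ)) * ((ι k : ℂ) * (vecMulVec (h k) (star (h k)) * CR).trace) := by
      refine mul_nonneg ?_ (mul_nonneg ?_ ht)
      · have h1 : (0:ℝ) ≤ 1 + Ω k := by linarith [(hΩ k).le]
        have := Complex.zero_le_real.mpr h1
        push_cast at this ⊢
        exact this
      · exact Complex.zero_le_real.mpr (hι k)
    calc (Ω k : ℂ) * (vecMulVec (h k) (star (h k)) * CX).trace
        - (1 + (Ω k : ℂ)) * (vecMulVec (h k) (star (h k)) * (What k + (ι k : ℂ) • CR)).trace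
        + (Ω k : ℂ) * (σsq k : ℂ)
        = ((Ω k : ℂ) * (vecMulVec (h k) (star (h k)) * CX).trace
          - (1 + (Ω k : ℂ)) * (vecMulVec (h k) (star (h k)) * What k).trace
          + (Ω k : ℂ) * (σsq k : ℂ))
          - (1 + (Ω k : ℂ)) * ((ι k : ℂ) * (vecMulVec (h k) (star (h k)) * CR).trace) := by
          rw [Matrix.mul_add, Matrix.trace_add, Matrix.mul_smul, Matrix.trace_smul]
          simp only [smul_eq_mul]
          ring
      _ ≤ (Ω k : ℂ) * (vecMulVec (h k) (star (h k)) * CX).trace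
          - (1 + (Ω k : ℂ)) * (vecMulVec (h k) (star (h k)) * What k).trace
          + (Ω k : ℂ) * (σsq k : ℂ) := sub_le_self _ hc
      _ ≤ 0 := hSINR k
  · rw [hsum]; exact hPow
  · intro a; rw [hsum]
end
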